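/- arXiv:1805.09555 — 4 statements merged into one kernel-verified Lean document; each statement's English description precedes it below -/
import Mathlib

section
/- For every α > 1, the set D_feas = {(s,r) ∈ ℝ² : r ≥ 0 and α·c_d(s,r) ≤ r²} is a convex subset of ℝ². -/
/-!
Writing `x = (s, r)`, the integrand of `c_d` is the square of `(|r g + s q| - |q|)⁺`, which is
convex in `x` for every sample `(q, g)`. By Minkowski's inequality the L² norm `√(c_d x)` of a
pointwise convex family of nonnegative functions is convex in `x`. For `r ≥ 0` the constraint
`α c_d ≤ r²` reads `√α √(c_d x) ≤ r`, a sublevel set of a convex function.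
-/

open MeasureTheory ProbabilityTheory Filter Real

noncomputable section

/-- The standard Gaussian measure `N(0,1)` on `ℝ`. -/
def stdGaussian : Measure ℝ := gaussianReal 0 1

instance : IsProbabilityMeasure stdGaussian :=
  inferInstanceAs (IsProbabilityMeasure (gaussianReal 0 1))

/-- `c_d(s,r) = E[(min{|q| - |r g + s q|, 0})²]` for independent standard Gaussians `q, g`. -/
def cd (s r : ℝ) : ℝ :=
  ∫ p : ℝ × ℝ, (min (|p.1| - |r * p.2 + s * p.1|) 0) ^ 2
    ∂(stdGaussian.prod stdGaussian)

open Set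
open scoped ENNReal

section

variable {E Ω : Type*} [AddCommGroup E] [Module ℝ E] [MeasurableSpace Ω] {μ : Measure Ω}

theorem MeasureTheory.MemLp.integral_sq_eq_toReal_eLpNorm_sq {f : Ω → ℝ} (hf : MemLp f 2 μ) :
    ∫ ω, f ω ^ 2 ∂μ = (eLpNorm f 2 μ).toReal ^ 2 := by
  rw [hf.eLpNorm_eq_integral_rpow_norm two_ne_zero ENNReal.ofNat_ne_top,
    ENNReal.toReal_ofReal (by positivity)]
  have hnn : 0 ≤ ∫ ω, f ω ^ 2 ∂μ := integral_nonneg fun ω => sq_nonneg _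
  simp only [ENNReal.toReal_ofNat, Real.rpow_two, Real.norm_eq_abs, sq_abs]
  rw [← Real.rpow_natCast, ← Real.rpow_mul hnn]
  norm_num

theorem convexOn_toReal_eLpNorm {p : ℝ≥0∞} [Fact (1 ≤ p)] {F : E → Ω → ℝ}
    (hF : ∀ x, MemLp (F x) p μ) (hF_nonneg : ∀ x ω, 0 ≤ F x ω)
    (hF_convex : ∀ ω, ConvexOn ℝ univ fun x => F x ω) :
    ConvexOn ℝ univ fun x => (eLpNorm (F x) p μ).toReal := by
  refine ⟨convex_univ, fun x _ y _ a b ha hb hab => ?_⟩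
  have hxy := ((hF x).const_smul a).add ((hF y).const_smul b)
  simp only [← Lp.norm_toLp _ (hF _), smul_eq_mul]
  calc ‖(hF (a • x + b • y)).toLp‖ ≤ ‖hxy.toLp (a • F x + b • F y)‖ := by
        refine Lp.norm_le_norm_of_ae_le ?_
        filter_upwards [MemLp.coeFn_toLp (hF (a • x + b • y)), MemLp.coeFn_toLp hxy]
          with ω h₁ h₂
        rw [h₁, h₂, Real.norm_of_nonneg (hF_nonneg _ ω)]
        exact ((hF_convex ω).2 trivial trivial ha hb hab).trans (le_abs_self _)
    _ ≤ a * ‖(hF x).toLp‖ + b * ‖(hF y).toLp‖ := by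
        rw [MemLp.toLp_add ((hF x).const_smul a) ((hF y).const_smul b),
          MemLp.toLp_const_smul, MemLp.toLp_const_smul]
        refine (norm_add_le _ _).trans_eq ?_
        rw [norm_smul, norm_smul, Real.norm_of_nonneg ha, Real.norm_of_nonneg hb]

theorem convex_setOf_mul_sq_le_sq {g : E → ℝ}
    (hg : ConvexOn ℝ univ g) (hg_nonneg : ∀ x, 0 ≤ g x) (ℓ : E →ₗ[ℝ] ℝ) {α : ℝ} (hα : 0 ≤ α) :
    Convex ℝ {x | 0 ≤ ℓ x ∧ α * g x ^ 2 ≤ ℓ x ^ 2} := by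
  have hsub := ((hg.smul (Real.sqrt_nonneg α)).sub (ℓ.concaveOn convex_univ)).convex_le 0
  refine (congrArg (Convex ℝ) (Set.ext fun x => ?_)).mpr hsub
  have hsq : (√α * g x) ^ 2 = α * g x ^ 2 := by rw [mul_pow, Real.sq_sqrt hα]
  have hpos : 0 ≤ √α * g x := mul_nonneg (Real.sqrt_nonneg α) (hg_nonneg x)
  simp only [mem_ofPred_eq, mem_univ, true_and, Pi.sub_apply, smul_eq_mul, sub_nonpos]
  constructor
  · rintro ⟨hℓ, h⟩
    rwa [← hsq, pow_le_pow_iff_left₀ hpos hℓ two_ne_zero] at h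
  · intro h
    exact ⟨hpos.trans h, hsq ▸ pow_le_pow_left₀ hpos h 2⟩

end

/-- In the paper's notation, `cdExcess (s, r) (q, g) = (|r g + s q| - |q|)⁺`. -/
def cdExcess (x q : ℝ × ℝ) : ℝ := max (|x.2 * q.2 + x.1 * q.1| - |q.1|) 0

theorem cdExcess_nonneg (x q : ℝ × ℝ) : 0 ≤ cdExcess x q := le_max_right _ _

theorem convexOn_cdExcess (q : ℝ × ℝ) : ConvexOn ℝ univ fun x => cdExcess x q := by
  let L : ℝ × ℝ →ₗ[ℝ] ℝ := q.2 • LinearMap.snd ℝ ℝ ℝ + q.1 • LinearMap.fst ℝ ℝ ℝ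
  have hL : ∀ x : ℝ × ℝ, L x = x.2 * q.2 + x.1 * q.1 := fun x => by simp [L, mul_comm]
  have := ((((convexOn_norm convex_univ).add_const (-|q.1|)).sup
    (convexOn_const 0 convex_univ)).comp_linearMap L)
  simpa [Function.comp_def, hL, cdExcess, sub_eq_add_neg] using this

theorem memLp_cdExcess (x : ℝ × ℝ) : MemLp (cdExcess x) 2 (stdGaussian.prod stdGaussian) := by
  have hid : MemLp id 2 stdGaussian := memLp_id_gaussianReal' 2 ENNReal.ofNat_ne_top
  have hbound : MemLp (fun q : ℝ × ℝ => |x.2| * ‖q.2‖ + |x.1| * ‖q.1‖) 2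
      (stdGaussian.prod stdGaussian) :=
    ((hid.comp_snd stdGaussian).norm.const_mul |x.2|).add
      ((hid.comp_fst stdGaussian).norm.const_mul |x.1|)
  refine hbound.of_le (by unfold cdExcess; fun_prop) (ae_of_all _ fun q => ?_)
  rw [Real.norm_of_nonneg (cdExcess_nonneg x q), Real.norm_of_nonneg (by positivity)]
  refine max_le ?_ (by positivity)
  calc |x.2 * q.2 + x.1 * q.1| - |q.1| ≤ |x.2 * q.2| + |x.1 * q.1| := by
        linarith [abs_add_le (x.2 * q.2) (x.1 * q.1), abs_nonneg q.1]
    _ = |x.2| * ‖q.2‖ + |x.1| * ‖q.1‖ := by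
        rw [abs_mul, abs_mul, Real.norm_eq_abs, Real.norm_eq_abs]

theorem cd_eq_toReal_eLpNorm_cdExcess_sq (x : ℝ × ℝ) :
    cd x.1 x.2 = (eLpNorm (cdExcess x) 2 (stdGaussian.prod stdGaussian)).toReal ^ 2 := by
  rw [← (memLp_cdExcess x).integral_sq_eq_toReal_eLpNorm_sq, cd]
  refine integral_congr_ae (ae_of_all _ fun q => ?_)
  dsimp only [cdExcess]
  rw [← neg_sub, ← neg_zero, min_neg_neg, neg_sq, neg_zero]

/-- **Lemma (P.1).** For every `α > 1`, the set
`D_feas = {(s,r) : r ≥ 0 and α·c_d(s,r) ≤ r²}` is convex in `ℝ²`. -/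
theorem stmt1 (α : ℝ) (hα : 1 < α) :
    Convex ℝ {p : ℝ × ℝ | 0 ≤ p.2 ∧ α * cd p.1 p.2 ≤ p.2 ^ 2} := by
  have hconv := convexOn_toReal_eLpNorm (p := 2) memLp_cdExcess cdExcess_nonneg convexOn_cdExcess
  simpa only [cd_eq_toReal_eLpNorm_cdExcess_sq, LinearMap.snd_apply] using
    convex_setOf_mul_sq_le_sq hconv (fun _ => ENNReal.toReal_nonneg) (LinearMap.snd ℝ ℝ ℝ)
      (zero_le_one.trans hα.le)
end
end

section
/- For every α > 1 the set D_feas is compact, and the segment [−1,1] × {0} is contained in D_feas. Moreover, if α ≥ 2 then there exists z > 0 such that D_feas ⊆ [−1,1] × [0,z], and the intersection of D_feas with the vertical line {(s,r) ∈ ℝ² : s = 1} is exactly the single point {(1,0)}. -/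
/-!
Write `cd s r = E[h(q, r g + s q)]` with `h(x, y) = ((|y| - |x|)₊)²`. Since
`h(x, y) ≥ (1 - ε) y² - x² / ε`, we get `cd s r ≥ (1 - ε) (r² + s²) - 1 / ε`, which bounds `D_feas`
when `α > 1`; dominated convergence makes `cd` continuous, so `D_feas` is compact. For `|s| ≤ 1`
we have `|s q| ≤ |q|`, hence `cd s 0 = 0`.

As `g` and `-g` have the same law, `2 cd s r = E[h(q, |s q| + |r g|) + h(q, |s q| - |r g|)]`.
For `|s| ≥ 1` the first term alone dominates `(r g + (|s| - 1) q)²`, so `2 cd s r ≥ r² + (|s| - 1)²`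
and feasibility with `α ≥ 2` forces `|s| ≤ 1`. For `s = 1` the first term is exactly `r² g²` and
the second has positive expectation when `r ≠ 0`, so `2 cd 1 r > r²`.
-/

open MeasureTheory ProbabilityTheory Filter Real

noncomputable section

/-- The deterministic feasibility set `D_feas`. -/
def Dfeas (α : ℝ) : Set (ℝ × ℝ) := {p | 0 ≤ p.2 ∧ α * cd p.1 p.2 ≤ p.2 ^ 2}

open scoped NNReal

lemma abs_add_abs_sub_eq (u v : ℝ) :
    (|u + v| = |u| + |v| ∧ |u - v| = |(|u| - |v|)|) ∨
      (|u - v| = |u| + |v| ∧ |u + v| = |(|u| - |v|)|) := by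
  rcases le_total 0 u with hu | hu <;> rcases le_total 0 v with hv | hv <;>
    simp only [abs_of_nonneg, abs_of_nonpos, hu, hv] <;> grind

def hingeSq (x y : ℝ) : ℝ := (min (|x| - |y|) 0) ^ 2

namespace hingeSq

lemma abs_right (x y : ℝ) : hingeSq x |y| = hingeSq x y := by
  simp only [hingeSq, abs_abs]

lemma eq_zero_of_abs_le {x y : ℝ} (h : |y| ≤ |x|) : hingeSq x y = 0 := by
  simp [hingeSq, min_eq_right (sub_nonneg.mpr h)]

lemma eq_sq_of_abs_le {x y : ℝ} (h : |x| ≤ |y|) : hingeSq x y = (|y| - |x|) ^ 2 := by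
  rw [hingeSq, min_eq_left (sub_nonpos.mpr h), ← neg_sub, neg_sq]

lemma nonneg (x y : ℝ) : 0 ≤ hingeSq x y := sq_nonneg _

lemma le_sq (x y : ℝ) : hingeSq x y ≤ y ^ 2 := by
  rcases le_total |x| |y| with h | h
  · rw [eq_sq_of_abs_le h, ← sq_abs y]
    nlinarith [abs_nonneg x]
  · rw [eq_zero_of_abs_le h]; positivity

lemma sq_sub_le (x y : ℝ) : y ^ 2 - 2 * |x| * |y| ≤ hingeSq x y := by
  rcases le_total |x| |y| with h | h
  · rw [eq_sq_of_abs_le h, ← sq_abs y]; nlinarith [abs_nonneg x]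
  · rw [eq_zero_of_abs_le h, ← sq_abs y]; nlinarith [abs_nonneg y]

lemma one_sub_mul_sq_sub_le {ε : ℝ} (hε : 0 < ε) (x y : ℝ) :
    (1 - ε) * y ^ 2 - x ^ 2 / ε ≤ hingeSq x y := by
  have amgm : 2 * |x| * |y| ≤ ε * y ^ 2 + x ^ 2 / ε := by
    rw [← sq_abs x, ← sq_abs y, ← sub_nonneg]
    have key : ε * |y| ^ 2 + |x| ^ 2 / ε - 2 * |x| * |y| = (ε * |y| - |x|) ^ 2 / ε := by
      field_simp; ring
    rw [key]; positivity
  linarith [sq_sub_le x y]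

lemma abs_add_abs (x v : ℝ) : hingeSq x (|x| + |v|) = v ^ 2 := by
  have h : |(|x| + |v|)| = |x| + |v| := abs_of_nonneg (by positivity)
  rw [eq_sq_of_abs_le (by rw [h]; exact le_add_of_nonneg_right (abs_nonneg v)), h,
    add_sub_cancel_left, sq_abs]

lemma mono {x y y' : ℝ} (h : |y| ≤ |y'|) : hingeSq x y ≤ hingeSq x y' := by
  rcases le_total |y| |x| with hy | hy
  · rw [eq_zero_of_abs_le hy]; exact nonneg x y'
  · rw [eq_sq_of_abs_le hy, eq_sq_of_abs_le (hy.trans h)]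
    gcongr

lemma add_add_sub (x u v : ℝ) :
    hingeSq x (u + v) + hingeSq x (u - v) = hingeSq x (|u| + |v|) + hingeSq x (|u| - |v|) := by
  rw [← abs_right x (u + v), ← abs_right x (u - v), ← abs_right x (|u| - |v|)]
  rcases abs_add_abs_sub_eq u v with ⟨h₁, h₂⟩ | ⟨h₁, h₂⟩
  · rw [h₁, h₂]
  · rw [h₁, h₂, add_comm]

end hingeSq

@[fun_prop]
lemma Continuous.hingeSq {X : Type*} [TopologicalSpace X] {f g : X → ℝ} (hf : Continuous f)
    (hg : Continuous g) : Continuous fun x => hingeSq (f x) (g x) := by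
  unfold _root_.hingeSq; fun_prop

instance : Measure.IsOpenPosMeasure stdGaussian :=
  (gaussianReal_absolutelyContinuous' 0 one_ne_zero).isOpenPosMeasure

lemma memLp_id_stdGaussian (p : ℝ≥0) : MemLp id p stdGaussian := memLp_id_gaussianReal p

lemma integral_id_stdGaussian : ∫ x, x ∂stdGaussian = 0 := integral_id_gaussianReal

lemma integrable_sq_stdGaussian : Integrable (fun x : ℝ => x ^ 2) stdGaussian :=
  (memLp_id_stdGaussian 2).integrable_sq

lemma integral_sq_stdGaussian : ∫ x, x ^ 2 ∂stdGaussian = 1 := by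
  have h := variance_fun_id_gaussianReal (μ := 0) (v := 1)
  rw [variance_eq_integral measurable_id'.aemeasurable, integral_id_gaussianReal] at h
  rw [_root_.stdGaussian]; simpa using h

lemma measurePreserving_neg_stdGaussian :
    MeasurePreserving (fun x : ℝ => -x) stdGaussian stdGaussian :=
  ⟨measurable_neg, by simpa [_root_.stdGaussian] using gaussianReal_map_neg (μ := 0) (v := 1)⟩

local notation "γ₂" => stdGaussian.prod stdGaussian

lemma integrable_mul_snd_add_mul_fst_sq (s r : ℝ) :
    Integrable (fun p : ℝ × ℝ => (r * p.2 + s * p.1) ^ 2) γ₂ := by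
  have hid : MemLp id 2 stdGaussian := memLp_id_stdGaussian 2
  exact (((hid.comp_snd stdGaussian).const_mul r).add
    ((hid.comp_fst stdGaussian).const_mul s)).integrable_sq

lemma integral_mul_snd_add_mul_fst_sq (s r : ℝ) :
    ∫ p : ℝ × ℝ, (r * p.2 + s * p.1) ^ 2 ∂γ₂ = r ^ 2 + s ^ 2 := by
  have hsq := integrable_sq_stdGaussian
  have hid : Integrable (fun x : ℝ => x) stdGaussian := (memLp_id_stdGaussian 1).integrable le_rfl
  have hcross : Integrable (fun p : ℝ × ℝ => p.1 * p.2) γ₂ := hid.mul_prod hid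
  have hexpand : (fun p : ℝ × ℝ => (r * p.2 + s * p.1) ^ 2) =
      fun p => r ^ 2 * p.2 ^ 2 + (2 * r * s * (p.1 * p.2) + s ^ 2 * p.1 ^ 2) := by
    ext p; ring
  rw [hexpand, integral_add ((hsq.comp_snd _).const_mul _)
      ((hcross.const_mul _).fun_add ((hsq.comp_fst _).const_mul _)),
    integral_add (hcross.const_mul _) ((hsq.comp_fst _).const_mul _),
    integral_const_mul, integral_const_mul, integral_const_mul, integral_fun_fst (fun x => x ^ 2),
    integral_fun_snd (fun x => x ^ 2), integral_prod_mul (fun x => x) (fun x => x),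
    integral_id_stdGaussian, integral_sq_stdGaussian]
  simp

lemma cd_eq_integral_hingeSq (s r : ℝ) :
    cd s r = ∫ p : ℝ × ℝ, hingeSq p.1 (r * p.2 + s * p.1) ∂γ₂ := rfl

lemma integrable_hingeSq (s r : ℝ) :
    Integrable (fun p : ℝ × ℝ => hingeSq p.1 (r * p.2 + s * p.1)) γ₂ := by
  refine (integrable_mul_snd_add_mul_fst_sq s r).mono
    (by fun_prop : Continuous _).aestronglyMeasurable (ae_of_all _ fun p => ?_)
  simp only [Real.norm_of_nonneg (sq_nonneg _), Real.norm_of_nonneg (hingeSq.nonneg _ _)]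
  exact hingeSq.le_sq _ _

lemma cd_nonneg (s r : ℝ) : 0 ≤ cd s r :=
  integral_nonneg fun _ => sq_nonneg _

lemma cd_zero_of_abs_le_one {s : ℝ} (hs : |s| ≤ 1) : cd s 0 = 0 := by
  rw [cd_eq_integral_hingeSq]
  refine integral_eq_zero_of_ae (ae_of_all _ fun p => hingeSq.eq_zero_of_abs_le ?_)
  simpa [abs_mul] using mul_le_of_le_one_left (abs_nonneg p.1) hs

lemma one_sub_mul_sub_le_cd {ε : ℝ} (hε : 0 < ε) (s r : ℝ) :
    (1 - ε) * (r ^ 2 + s ^ 2) - 1 / ε ≤ cd s r := by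
  have hsq : Integrable (fun p : ℝ × ℝ => p.1 ^ 2) γ₂ := integrable_sq_stdGaussian.comp_fst _
  have hlow : ∫ p : ℝ × ℝ, ((1 - ε) * (r * p.2 + s * p.1) ^ 2 - p.1 ^ 2 / ε) ∂γ₂ ≤ cd s r :=
    integral_mono (((integrable_mul_snd_add_mul_fst_sq s r).const_mul (1 - ε)).sub
      (hsq.div_const ε)) (integrable_hingeSq s r) fun p => hingeSq.one_sub_mul_sq_sub_le hε _ _
  rwa [integral_sub ((integrable_mul_snd_add_mul_fst_sq s r).const_mul _) (hsq.div_const _),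
    integral_const_mul, integral_div, integral_mul_snd_add_mul_fst_sq,
    integral_fun_fst (fun x => x ^ 2), integral_sq_stdGaussian, probReal_univ, one_smul] at hlow

lemma continuous_cd : Continuous fun x : ℝ × ℝ => cd x.1 x.2 := by
  simp only [cd_eq_integral_hingeSq]
  refine continuous_iff_continuousAt.mpr fun x₀ => ?_
  let M := ‖x₀‖ + 1
  refine continuousAt_of_dominated (bound := fun p => 2 * M ^ 2 * (p.2 ^ 2 + p.1 ^ 2))
    (.of_forall fun x => (integrable_hingeSq x.1 x.2).aestronglyMeasurable) ?_
    (((integrable_sq_stdGaussian.comp_snd _).add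
      (integrable_sq_stdGaussian.comp_fst _)).const_mul _)
    (ae_of_all _ fun p => (by fun_prop : Continuous fun x : ℝ × ℝ =>
      hingeSq p.1 (x.2 * p.2 + x.1 * p.1)).continuousAt)
  filter_upwards [Metric.closedBall_mem_nhds x₀ one_pos] with x hx
  refine ae_of_all _ fun p => ?_
  have hxM : ‖x‖ ≤ M := norm_le_of_mem_closedBall hx
  have h₁ : x.1 ^ 2 ≤ M ^ 2 := sq_le_sq.mpr ((norm_fst_le x).trans (hxM.trans (le_abs_self _)))
  have h₂ : x.2 ^ 2 ≤ M ^ 2 := sq_le_sq.mpr ((norm_snd_le x).trans (hxM.trans (le_abs_self _)))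
  rw [Real.norm_of_nonneg (hingeSq.nonneg _ _)]
  calc hingeSq p.1 (x.2 * p.2 + x.1 * p.1) ≤ (x.2 * p.2 + x.1 * p.1) ^ 2 := hingeSq.le_sq _ _
    _ ≤ (x.1 ^ 2 + x.2 ^ 2) * (p.2 ^ 2 + p.1 ^ 2) := by
      nlinarith [sq_nonneg (x.2 * p.1 - x.1 * p.2)]
    _ ≤ 2 * M ^ 2 * (p.2 ^ 2 + p.1 ^ 2) := by gcongr; linarith

lemma cd_neg_right (s r : ℝ) : cd s (-r) = cd s r := by
  have hneg : MeasurePreserving (Prod.map id fun x : ℝ => -x) γ₂ γ₂ :=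
    (MeasurePreserving.id _).prod measurePreserving_neg_stdGaussian
  have hemb : MeasurableEmbedding (Prod.map id fun x : ℝ => -x) :=
    (MeasurableEquiv.prodCongr (.refl ℝ) (.neg ℝ)).measurableEmbedding
  rw [cd_eq_integral_hingeSq, cd_eq_integral_hingeSq,
    ← hneg.integral_comp hemb fun p : ℝ × ℝ => hingeSq p.1 (r * p.2 + s * p.1)]
  simp only [Prod.map_fst, Prod.map_snd, id, neg_mul, mul_neg]

lemma hingeSq_add_hingeSq_neg (s r : ℝ) (p : ℝ × ℝ) :
    hingeSq p.1 (r * p.2 + s * p.1) + hingeSq p.1 (-r * p.2 + s * p.1) =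
      hingeSq p.1 (|s * p.1| + |r * p.2|) + hingeSq p.1 (|s * p.1| - |r * p.2|) := by
  rw [← hingeSq.add_add_sub, add_comm (r * p.2), neg_mul, neg_add_eq_sub]

lemma integrable_hingeSq_abs_add_add_abs_sub (s r : ℝ) :
    Integrable (fun p : ℝ × ℝ =>
      hingeSq p.1 (|s * p.1| + |r * p.2|) + hingeSq p.1 (|s * p.1| - |r * p.2|)) γ₂ :=
  ((integrable_hingeSq s r).add (integrable_hingeSq s (-r))).congr
    (ae_of_all _ (hingeSq_add_hingeSq_neg s r))

lemma two_mul_cd (s r : ℝ) :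
    2 * cd s r = ∫ p : ℝ × ℝ,
      (hingeSq p.1 (|s * p.1| + |r * p.2|) + hingeSq p.1 (|s * p.1| - |r * p.2|)) ∂γ₂ := by
  rw [two_mul]
  nth_rw 2 [← cd_neg_right]
  rw [cd_eq_integral_hingeSq, cd_eq_integral_hingeSq,
    ← integral_add (integrable_hingeSq s r) (integrable_hingeSq s (-r))]
  exact integral_congr_ae (ae_of_all _ (hingeSq_add_hingeSq_neg s r))

lemma sq_add_sq_le_two_mul_cd {s : ℝ} (hs : 1 ≤ |s|) (r : ℝ) :
    r ^ 2 + (|s| - 1) ^ 2 ≤ 2 * cd s r := by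
  rw [← integral_mul_snd_add_mul_fst_sq, two_mul_cd]
  refine integral_mono (integrable_mul_snd_add_mul_fst_sq _ _)
    (integrable_hingeSq_abs_add_add_abs_sub s r) fun p => ?_
  have hsum : 0 ≤ |s * p.1| + |r * p.2| := by positivity
  have hge : |p.1| ≤ |s * p.1| + |r * p.2| := by
    rw [abs_mul, abs_mul]
    nlinarith [abs_nonneg p.1, abs_nonneg r, abs_nonneg p.2]
  have hmain : (r * p.2 + (|s| - 1) * p.1) ^ 2 ≤ hingeSq p.1 (|s * p.1| + |r * p.2|) := by
    rw [hingeSq.eq_sq_of_abs_le (hge.trans (le_abs_self _)), abs_of_nonneg hsum, ← sq_abs]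
    gcongr
    calc |r * p.2 + (|s| - 1) * p.1| ≤ |r * p.2| + |(|s| - 1) * p.1| := abs_add_le _ _
      _ = |s * p.1| + |r * p.2| - |p.1| := by
        rw [abs_mul, abs_mul, abs_mul, abs_of_nonneg (sub_nonneg.mpr hs)]; ring
  linarith [hingeSq.nonneg p.1 (|s * p.1| - |r * p.2|)]

lemma integral_pos_of_continuous {X : Type*} [TopologicalSpace X] [MeasurableSpace X]
    [OpensMeasurableSpace X] {μ : Measure X} [μ.IsOpenPosMeasure] {f : X → ℝ}
    (hf : Continuous f) (hf₀ : 0 ≤ f) (hfi : Integrable f μ) {x : X} (hx : f x ≠ 0) :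
    0 < ∫ y, f y ∂μ := by
  rw [integral_pos_iff_support_of_nonneg hf₀ hfi]
  exact hf.isOpen_support.measure_pos μ ⟨x, hx⟩

lemma integrable_hingeSq_abs_sub (r : ℝ) :
    Integrable (fun p : ℝ × ℝ => hingeSq p.1 (|p.1| - |r * p.2|)) γ₂ := by
  refine (integrable_mul_snd_add_mul_fst_sq 0 r).mono
    (by fun_prop : Continuous _).aestronglyMeasurable (ae_of_all _ fun p => ?_)
  rw [Real.norm_of_nonneg (hingeSq.nonneg _ _), Real.norm_of_nonneg (sq_nonneg _), zero_mul,
    add_zero, ← hingeSq.abs_add_abs p.1 (r * p.2)]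
  refine hingeSq.mono ((abs_sub _ _).trans_eq ?_)
  simp only [abs_abs]
  exact (abs_of_nonneg (by positivity)).symm

lemma two_mul_cd_one (r : ℝ) :
    2 * cd 1 r = r ^ 2 + ∫ p : ℝ × ℝ, hingeSq p.1 (|p.1| - |r * p.2|) ∂γ₂ := by
  have hsnd := integral_mul_snd_add_mul_fst_sq 0 r
  simp only [zero_mul, add_zero, zero_pow two_ne_zero] at hsnd
  rw [two_mul_cd, ← hsnd, ← integral_add ((integrable_mul_snd_add_mul_fst_sq 0 r).congr
    (ae_of_all _ fun p => by simp)) (integrable_hingeSq_abs_sub r)]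
  simp only [one_mul, hingeSq.abs_add_abs]

lemma integral_hingeSq_abs_sub_pos {r : ℝ} (hr : r ≠ 0) :
    0 < ∫ p : ℝ × ℝ, hingeSq p.1 (|p.1| - |r * p.2|) ∂γ₂ :=
  integral_pos_of_continuous (x := (0, 1)) (by fun_prop) (fun _ => hingeSq.nonneg _ _)
    (integrable_hingeSq_abs_sub r) (by simp [hingeSq, hr])

lemma norm_le_of_mem_Dfeas {α : ℝ} (hα : 1 < α) {p : ℝ × ℝ} (hp : p ∈ Dfeas α) :
    ‖p‖ ≤ 2 * α / (α - 1) := by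
  obtain ⟨-, hfeas⟩ := hp
  have hα₁ : 0 < α - 1 := sub_pos.mpr hα
  have hK : 0 ≤ 2 * α / (α - 1) := by positivity
  -- `ε` is chosen so that `α * (1 - ε) = (α + 1) / 2 > 1`
  have hlow := one_sub_mul_sub_le_cd (ε := (α - 1) / (2 * α)) (by positivity) p.1 p.2
  have hscale : α * ((1 - (α - 1) / (2 * α)) * (p.2 ^ 2 + p.1 ^ 2) - 1 / ((α - 1) / (2 * α))) =
      (α + 1) / 2 * (p.2 ^ 2 + p.1 ^ 2) - 2 * α ^ 2 / (α - 1) := by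
    field_simp; ring
  have key : (α - 1) / 2 * (p.1 ^ 2 + p.2 ^ 2) ≤ 2 * α ^ 2 / (α - 1) := by
    nlinarith [sq_nonneg p.1]
  have hsq : p.1 ^ 2 + p.2 ^ 2 ≤ (2 * α / (α - 1)) ^ 2 :=
    calc p.1 ^ 2 + p.2 ^ 2 = 2 / (α - 1) * ((α - 1) / 2 * (p.1 ^ 2 + p.2 ^ 2)) := by field_simp
      _ ≤ 2 / (α - 1) * (2 * α ^ 2 / (α - 1)) := by gcongr
      _ = (2 * α / (α - 1)) ^ 2 := by field_simp
  refine norm_prod_le_iff.mpr ⟨?_, ?_⟩ <;> rw [Real.norm_eq_abs] <;>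
    exact abs_le_of_sq_le_sq (by nlinarith) hK

lemma isCompact_Dfeas {α : ℝ} (hα : 1 < α) : IsCompact (Dfeas α) := by
  refine Metric.isCompact_of_isClosed_isBounded ?_
    ((Metric.isBounded_closedBall (x := 0)).subset fun p hp =>
      mem_closedBall_zero_iff.mpr (norm_le_of_mem_Dfeas hα hp))
  exact (isClosed_le continuous_const continuous_snd).inter
    (isClosed_le (continuous_const.mul continuous_cd) (continuous_snd.pow 2))

lemma Icc_prod_zero_subset_Dfeas (α : ℝ) : Set.Icc (-1 : ℝ) 1 ×ˢ {0} ⊆ Dfeas α := by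
  rintro ⟨s, r⟩ ⟨hs, rfl⟩
  exact ⟨le_rfl, by simp [cd_zero_of_abs_le_one (abs_le.mpr hs)]⟩

lemma abs_fst_le_one_of_mem_Dfeas {α : ℝ} (hα : 2 ≤ α) {p : ℝ × ℝ} (hp : p ∈ Dfeas α) :
    |p.1| ≤ 1 := by
  by_contra! hs
  have hcd : 2 * cd p.1 p.2 ≤ α * cd p.1 p.2 := by gcongr; exact cd_nonneg _ _
  nlinarith [sq_add_sq_le_two_mul_cd hs.le p.2, hp.2]

lemma eq_zero_of_one_mem_Dfeas {α : ℝ} (hα : 2 ≤ α) {r : ℝ} (hr : (1, r) ∈ Dfeas α) : r = 0 := by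
  by_contra! hr₀
  have hcd : 2 * cd 1 r ≤ α * cd 1 r := by gcongr; exact cd_nonneg _ _
  linarith [two_mul_cd_one r, integral_hingeSq_abs_sub_pos hr₀, hr.2]

/-- **Lemma (P.2).** For `α > 1`, `D_feas` is compact and contains `[-1,1] × {0}`;
for `α ≥ 2` it is contained in a box `[-1,1] × [0,z]` with `z > 0`, and its
intersection with the line `s = 1` is exactly `{(1,0)}`. -/
theorem stmt2 (α : ℝ) (hα : 1 < α) :
    IsCompact (Dfeas α) ∧
    (Set.Icc (-1 : ℝ) 1 ×ˢ ({0} : Set ℝ)) ⊆ Dfeas α ∧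
    (2 ≤ α →
      (∃ z : ℝ, 0 < z ∧ Dfeas α ⊆ Set.Icc (-1 : ℝ) 1 ×ˢ Set.Icc (0 : ℝ) z) ∧
      Dfeas α ∩ {p : ℝ × ℝ | p.1 = 1} = {((1 : ℝ), (0 : ℝ))}) := by
  refine ⟨isCompact_Dfeas hα, Icc_prod_zero_subset_Dfeas α, fun hα₂ => ⟨?_, ?_⟩⟩
  · have hα₁ : 0 < α - 1 := sub_pos.mpr hα
    refine ⟨2 * α / (α - 1), by positivity, fun p hp =>
      ⟨abs_le.mp (abs_fst_le_one_of_mem_Dfeas hα₂ hp), hp.1, ?_⟩⟩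
    exact (le_abs_self _).trans ((norm_snd_le p).trans (norm_le_of_mem_Dfeas hα hp))
  · ext ⟨s, r⟩
    simp only [Set.mem_inter_iff, Set.mem_singleton_iff, Prod.mk.injEq]
    constructor
    · rintro ⟨hp, rfl⟩
      exact ⟨rfl, eq_zero_of_one_mem_Dfeas hα₂ hp⟩
    · rintro ⟨rfl, rfl⟩
      exact ⟨Icc_prod_zero_subset_Dfeas α ⟨by norm_num, rfl⟩, rfl⟩
end
end

section
/- For every α > 2, the equation (π/α)·c² + c − (1 + c²)·arctan(c) = 0 has exactly one solution c in the open half-line (0, ∞). -/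
/-!
Write `f q x = q x² + x - (1 + x²) arctan x` with `q = π/α ∈ (0, π/2)`. Its derivative is
`2x (q - arctan x)`, so `f q` increases on `[0, tan q]` and decreases afterwards. Since `f q 0 = 0`,
there is no root in `(0, tan q]`; since `arctan x → π/2 > q`, `f q` eventually becomes negative,
and the intermediate value theorem together with strict antitonicity gives exactly one root beyond
`tan q`.
-/

open Real Set Filter

lemma existsUnique_pos_zero_of_strictMonoOn_of_strictAntiOn {f : ℝ → ℝ} {t X : ℝ}
    (h0 : f 0 = 0) (ht : 0 < t) (hmono : StrictMonoOn f (Icc 0 t))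
    (hanti : StrictAntiOn f (Ici t)) (hcont : ContinuousOn f (Icc t X)) (htX : t < X)
    (hX : f X < 0) : ∃! c, 0 < c ∧ f c = 0 := by
  have hpos : ∀ y ∈ Ioc 0 t, 0 < f y := fun y hy =>
    h0 ▸ hmono ⟨le_rfl, ht.le⟩ ⟨hy.1.le, hy.2⟩ hy.1
  obtain ⟨c, hc, hfc⟩ := intermediate_value_Ioo' htX.le hcont
    ⟨hX, hpos t ⟨ht, le_rfl⟩⟩
  refine ⟨c, ⟨ht.trans hc.1, hfc⟩, fun y ⟨hy, hfy⟩ => ?_⟩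
  have hty : t < y := lt_of_not_ge fun hyt => (hpos y ⟨hy, hyt⟩).ne' hfy
  exact hanti.injOn (le_of_lt hty) (le_of_lt hc.1) (hfy.trans hfc.symm)

lemma arctan_lt_iff_lt_tan {x q : ℝ} (hq₀ : -(π / 2) < q) (hq : q < π / 2) :
    arctan x < q ↔ x < tan q := by
  rw [← arctan_lt_arctan_iff (y := tan q), arctan_tan hq₀ hq]

lemma lt_arctan_iff_tan_lt {x q : ℝ} (hq₀ : -(π / 2) < q) (hq : q < π / 2) :
    q < arctan x ↔ tan q < x := by
  rw [← arctan_lt_arctan_iff (x := tan q), arctan_tan hq₀ hq]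

/-- The left-hand side of the equation, with `q` standing for `π / α`. -/
noncomputable def arctanBalance (q x : ℝ) : ℝ :=
  q * x ^ 2 + x - (1 + x ^ 2) * arctan x

namespace arctanBalance

variable (q : ℝ)

lemma zero_right : arctanBalance q 0 = 0 := by
  simp [arctanBalance]

lemma continuous : Continuous (arctanBalance q) := by
  unfold arctanBalance
  fun_prop

lemma hasDerivAt (x : ℝ) : HasDerivAt (arctanBalance q) (2 * x * (q - arctan x)) x := by
  have h := (((hasDerivAt_pow 2 x).const_mul q).add (hasDerivAt_id x)).sub
    (((hasDerivAt_pow 2 x).const_add 1).mul (hasDerivAt_arctan x))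
  refine h.congr_deriv ?_
  have : (1 : ℝ) + x ^ 2 ≠ 0 := by positivity
  field_simp
  ring

lemma strictMonoOn_Icc (hq₀ : -(π / 2) < q) (hq : q < π / 2) :
    StrictMonoOn (arctanBalance q) (Icc 0 (tan q)) := by
  refine strictMonoOn_of_hasDerivWithinAt_pos (convex_Icc _ _) (continuous q).continuousOn
    (fun x _ => (hasDerivAt q x).hasDerivWithinAt) fun x hx => ?_
  rw [interior_Icc] at hx
  have : arctan x < q := (arctan_lt_iff_lt_tan hq₀ hq).2 hx.2
  have : 0 < x := hx.1
  positivity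

lemma strictAntiOn_Ici (hq₀ : 0 ≤ q) (hq : q < π / 2) :
    StrictAntiOn (arctanBalance q) (Ici (tan q)) := by
  refine strictAntiOn_of_hasDerivWithinAt_neg (convex_Ici _) (continuous q).continuousOn
    (fun x _ => (hasDerivAt q x).hasDerivWithinAt) fun x hx => ?_
  rw [interior_Ici] at hx
  have : q < arctan x := (lt_arctan_iff_tan_lt (by linarith [pi_pos]) hq).2 hx
  have : 0 < x := (tan_nonneg_of_nonneg_of_le_pi_div_two hq₀ hq.le).trans_lt hx
  nlinarith

lemma eventually_neg (hq : q < π / 2) : ∀ᶠ x in atTop, arctanBalance q x < 0 := by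
  obtain ⟨m, hqm, hm⟩ := exists_between hq
  have hm : ∀ᶠ x in atTop, m < arctan x :=
    (tendsto_arctan_atTop.mono_right nhdsWithin_le_nhds).eventually (lt_mem_nhds hm)
  filter_upwards [hm, eventually_gt_atTop (1 / (m - q)), eventually_gt_atTop 0]
    with x hmx hx hx₀
  have : 1 < (m - q) * x := by rwa [div_lt_iff₀' (by linarith)] at hx
  have : 0 ≤ arctan x := arctan_nonneg.2 hx₀.le
  unfold arctanBalance
  nlinarith

end arctanBalance

/-- **Lemma (P.4).** For `α > 2`, the equation `(π/α)c² + c - (1+c²) arctan c = 0`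
has exactly one solution `c` in `(0, ∞)`. -/
theorem stmt4 (α : ℝ) (hα : 2 < α) :
    ∃! c : ℝ, 0 < c ∧ (π / α) * c ^ 2 + c - (1 + c ^ 2) * Real.arctan c = 0 := by
  have hq₀ : 0 < π / α := by positivity
  have hq : π / α < π / 2 := div_lt_div_of_pos_left pi_pos two_pos hα
  obtain ⟨X, hX, htX⟩ :=
    ((arctanBalance.eventually_neg _ hq).and (eventually_gt_atTop (tan (π / α)))).exists
  exact existsUnique_pos_zero_of_strictMonoOn_of_strictAntiOn
    (arctanBalance.zero_right _)
    (tan_pos_of_pos_of_lt_pi_div_two hq₀ hq)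
    (arctanBalance.strictMonoOn_Icc _ (by linarith [pi_pos]) hq)
    (arctanBalance.strictAntiOn_Ici _ hq₀.le hq)
    (arctanBalance.continuous _).continuousOn htX hX
end

section
/- Fix α > 2 and s ∈ [−1,1]. The function r ↦ r² − α·c_d(s,r) on [0,∞) has a unique global maximizer, namely r_α(s) = √(1/tan(π/α)² + 1 − s²) − 1/tan(π/α); that is, for every r ≥ 0 with r ≠ r_α(s), one has r² − α·c_d(s,r) < r_α(s)² − α·c_d(s, r_α(s)). -/
open MeasureTheory ProbabilityTheory Filter Real

noncomputable section

/-- `c_α = 1 / tan(π/α)`. -/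
def calpha (α : ℝ) : ℝ := 1 / Real.tan (π / α)

/-- `r_α(s) = √(c_α² + 1 - s²) - c_α`. -/
def ralpha (α s : ℝ) : ℝ := Real.sqrt (calpha α ^ 2 + 1 - s ^ 2) - calpha α

/-
The integrand `(min {|q| - |r g + s q|, 0})²` is homogeneous of degree two in `(q, g)`, so
polar coordinates followed by `t = tan θ` give
  `c_d(s,r) = (2/π) ∫ (min {1 - |r t + s|, 0})² / (1 + t²)² dt`.
For `r > 0` this integrand vanishes on `[-(1+s)/r, (1-s)/r]` and is rational on the two tails,
which yields `c_d` in closed form and, with `ψ(r) = arccot((1-s)/r) + arccot((1+s)/r)`,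
  `d/dr (r² - α c_d(s,r)) = (2 α r / π) (π/α - ψ(r))`.
`ψ` is strictly increasing, and by the arctangent addition formula `ψ(r) = π/α` exactly when
`r² + 2 c_α r = 1 - s²`, whose nonnegative root is `r_α(s)`. So the function increases on
`[0, r_α(s)]` and decreases afterwards.
-/

open Set Topology Function

lemma apply_lt_of_deriv_pos_of_deriv_neg {f f' : ℝ → ℝ} {a b x : ℝ} (hab : a ≤ b)
    (hfa : ContinuousWithinAt f (Ici a) a) (hf : ∀ y ∈ Ioi a, HasDerivAt f (f' y) y)
    (hpos : ∀ y ∈ Ioo a b, 0 < f' y) (hneg : ∀ y ∈ Ioi b, f' y < 0) (hx : a ≤ x) (hxb : x ≠ b) :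
    f x < f b := by
  have hcont : ContinuousOn f (Ici a) := by
    intro y hy
    rcases (mem_Ici.1 hy).eq_or_lt with rfl | hy
    · exact hfa
    · exact (hf y hy).continuousAt.continuousWithinAt
  rcases hxb.lt_or_gt with hxb | hxb
  · refine strictMonoOn_of_hasDerivWithinAt_pos (convex_Icc a b) (hcont.mono Icc_subset_Ici_self)
      (fun y hy => ?_) (fun y hy => hpos y (by rwa [interior_Icc] at hy)) ⟨hx, hxb.le⟩
      ⟨hab, le_rfl⟩ hxb
    rw [interior_Icc] at hy
    exact (hf y hy.1).hasDerivWithinAt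
  · refine strictAntiOn_of_hasDerivWithinAt_neg (convex_Ici b) (hcont.mono (Ici_subset_Ici.2 hab))
      (fun y hy => ?_) (fun y hy => hneg y (by rwa [interior_Ici] at hy)) self_mem_Ici hxb.le hxb
    rw [interior_Ici] at hy
    exact (hf y (hab.trans_lt hy)).hasDerivWithinAt

lemma integral_stdGaussian_prod_stdGaussian (f : ℝ × ℝ → ℝ) :
    ∫ z, f z ∂(stdGaussian.prod stdGaussian) =
      ∫ z : ℝ × ℝ, (2 * π)⁻¹ * exp (-(z.1 ^ 2 + z.2 ^ 2) / 2) * f z := by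
  rw [_root_.stdGaussian, gaussianReal_of_var_ne_zero _ one_ne_zero, prod_withDensity
    (measurable_gaussianPDF _ _) (measurable_gaussianPDF _ _), ← Measure.volume_eq_prod,
    integral_withDensity_eq_integral_toReal_smul (by fun_prop)
      (ae_of_all _ fun _ => ENNReal.mul_lt_top gaussianPDF_lt_top gaussianPDF_lt_top)]
  congr 1 with z
  rw [ENNReal.toReal_mul, gaussianPDF, gaussianPDF,
    ENNReal.toReal_ofReal (gaussianPDFReal_nonneg _ _ _),
    ENNReal.toReal_ofReal (gaussianPDFReal_nonneg _ _ _), smul_eq_mul]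
  simp only [gaussianPDFReal, NNReal.coe_one, mul_one, sub_zero]
  rw [mul_mul_mul_comm, ← mul_inv, Real.mul_self_sqrt (by positivity), ← Real.exp_add]
  ring_nf

lemma integral_Ioi_pow_three_mul_exp_neg_sq_div_two :
    ∫ ρ in Ioi (0 : ℝ), ρ ^ 3 * exp (-ρ ^ 2 / 2) = 2 := by
  have h := integral_rpow_mul_exp_neg_mul_rpow (p := 2) (q := 3) (b := 1 / 2)
    (by norm_num) (by norm_num) (by norm_num)
  norm_num at h
  convert h using 1
  refine setIntegral_congr_fun measurableSet_Ioi fun ρ _ => ?_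
  norm_cast
  ring_nf

lemma integral_gaussian_mul_of_homogeneous {F : ℝ × ℝ → ℝ}
    (hF : ∀ c x y, F (c * x, c * y) = c ^ 2 * F (x, y)) :
    ∫ z : ℝ × ℝ, (2 * π)⁻¹ * exp (-(z.1 ^ 2 + z.2 ^ 2) / 2) * F z =
      π⁻¹ * ∫ θ in Ioo (-π) π, F (cos θ, sin θ) := by
  have hpolar (ρ θ : ℝ) :
      ρ • ((2 * π)⁻¹ * exp (-((ρ * cos θ) ^ 2 + (ρ * sin θ) ^ 2) / 2) * F (ρ * cos θ, ρ * sin θ)) =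
        (2 * π)⁻¹ * (ρ ^ 3 * exp (-ρ ^ 2 / 2)) * F (cos θ, sin θ) := by
    simp only [hF, mul_pow, ← mul_add, cos_sq_add_sin_sq, mul_one, smul_eq_mul]
    ring
  rw [← integral_comp_polarCoord_symm, polarCoord_target]
  simp only [polarCoord_symm_apply]
  rw [setIntegral_congr_fun (measurableSet_Ioi.prod measurableSet_Ioo) fun p _ => hpolar p.1 p.2,
    Measure.volume_eq_prod,
    setIntegral_prod_mul (fun ρ => (2 * π)⁻¹ * (ρ ^ 3 * exp (-ρ ^ 2 / 2)))
      (fun θ => F (cos θ, sin θ)),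
    integral_const_mul,
    integral_Ioi_pow_three_mul_exp_neg_sq_div_two]
  field_simp

lemma integral_Ioo_neg_pi_pi_of_periodic {g : ℝ → ℝ} (hg : Periodic g π) (hcont : Continuous g) :
    ∫ θ in Ioo (-π) π, g θ = 2 * ∫ θ in Ioo (-(π / 2)) (π / 2), g θ := by
  have hint : ∀ a b, IntervalIntegrable g volume a b := fun a b => hcont.intervalIntegrable a b
  rw [← integral_Ioc_eq_integral_Ioo, ← integral_Ioc_eq_integral_Ioo,
    ← intervalIntegral.integral_of_le (by linarith [pi_pos]),
    ← intervalIntegral.integral_of_le (by linarith [pi_pos])]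
  calc ∫ θ in -π..π, g θ = ∫ θ in -π..-π + (2 : ℤ) • π, g θ := by norm_num; ring_nf
    _ = 2 * ∫ θ in -(π / 2)..-(π / 2) + π, g θ := by
      rw [hg.intervalIntegral_add_zsmul_eq 2 _ hint, hg.intervalIntegral_add_eq _ (-(π / 2))]
      norm_num
    _ = 2 * ∫ θ in -(π / 2)..π / 2, g θ := by ring_nf

lemma integral_comp_arctan_div_one_add_sq (g : ℝ → ℝ) :
    ∫ t, g (arctan t) / (1 + t ^ 2) = ∫ θ in Ioo (-(π / 2)) (π / 2), g θ := by
  symm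
  rw [← Real.range_arctan, ← image_univ,
    integral_image_eq_integral_abs_deriv_smul MeasurableSet.univ
      (fun t _ => (Real.hasDerivAt_arctan t).hasDerivWithinAt) Real.arctan_injective.injOn,
    Measure.restrict_univ]
  congr 1 with t
  rw [abs_of_pos (by positivity), smul_eq_mul]
  ring

lemma integral_stdGaussian_prod_stdGaussian_of_homogeneous {F : ℝ × ℝ → ℝ} (hcont : Continuous F)
    (hF : ∀ c x y, F (c * x, c * y) = c ^ 2 * F (x, y)) :
    ∫ z, F z ∂(stdGaussian.prod stdGaussian) = 2 / π * ∫ t, F (1, t) / (1 + t ^ 2) ^ 2 := by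
  have hperiodic : Periodic (fun θ => F (cos θ, sin θ)) π := fun θ => by
    simpa [cos_add_pi, sin_add_pi] using hF (-1) (cos θ) (sin θ)
  have harctan (t : ℝ) : F (cos (arctan t), sin (arctan t)) = F (1, t) / (1 + t ^ 2) := by
    have h := hF (√(1 + t ^ 2))⁻¹ 1 t
    rw [inv_pow, sq_sqrt (by positivity), mul_one, inv_mul_eq_div, inv_mul_eq_div] at h
    rw [cos_arctan, sin_arctan, one_div, h]
  rw [integral_stdGaussian_prod_stdGaussian, integral_gaussian_mul_of_homogeneous hF,
    integral_Ioo_neg_pi_pi_of_periodic hperiodic (by fun_prop),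
    ← integral_comp_arctan_div_one_add_sq]
  simp only [harctan, div_div, ← sq]
  ring

def tailIntegral (c r : ℝ) : ℝ := (r ^ 2 + c ^ 2) / 2 * (π / 2 - arctan (c / r)) - r * c / 2

lemma tendsto_mul_add_div_one_add_sq_atTop (a b : ℝ) :
    Tendsto (fun t : ℝ => (a * t + b) / (1 + t ^ 2)) atTop (𝓝 0) := by
  have hu : Tendsto (fun u : ℝ => (a * u + b * u ^ 2) / (u ^ 2 + 1)) (𝓝 0) (𝓝 0) := by
    have h : Continuous fun u : ℝ => (a * u + b * u ^ 2) / (u ^ 2 + 1) :=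
      Continuous.div (by fun_prop) (by fun_prop) fun u => by positivity
    simpa using h.tendsto 0
  refine (hu.comp tendsto_inv_atTop_zero).congr' ?_
  filter_upwards [eventually_ne_atTop 0] with t ht
  simp only [comp_apply]
  field_simp

lemma integral_Ioi_eq_tailIntegral {r : ℝ} (hr : 0 < r) (c : ℝ) :
    ∫ t in Ioi (c / r), (r * t - c) ^ 2 / (1 + t ^ 2) ^ 2 = tailIntegral c r := by
  set H : ℝ → ℝ := fun t =>
    (r ^ 2 + c ^ 2) / 2 * arctan t + ((c ^ 2 - r ^ 2) * t + 2 * r * c) / (1 + t ^ 2) / 2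
  have hH (t : ℝ) : HasDerivAt H ((r * t - c) ^ 2 / (1 + t ^ 2) ^ 2) t := by
    have h := ((Real.hasDerivAt_arctan t).const_mul ((r ^ 2 + c ^ 2) / 2)).add
      ((((hasDerivAt_id t).const_mul (c ^ 2 - r ^ 2)).add_const (2 * r * c)).div
        ((hasDerivAt_pow 2 t).const_add 1) (by positivity) |>.div_const 2)
    refine h.congr_deriv ?_
    simp only [id, Nat.cast_ofNat]
    field_simp
    ring
  have hlim : Tendsto H atTop (𝓝 ((r ^ 2 + c ^ 2) / 2 * (π / 2))) := by
    have h := (tendsto_arctan_atTop.mono_right nhdsWithin_le_nhds).const_mul ((r ^ 2 + c ^ 2) / 2)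
      |>.add ((tendsto_mul_add_div_one_add_sq_atTop (c ^ 2 - r ^ 2) (2 * r * c)).div_const 2)
    simpa using h
  rw [integral_Ioi_of_hasDerivAt_of_nonneg (hH _).continuousAt.continuousWithinAt
    (fun t _ => hH t) (fun t _ => by positivity) hlim, tailIntegral]
  simp only [H]
  field_simp
  ring

def cdLineDensity (s r t : ℝ) : ℝ := (min (1 - |r * t + s|) 0) ^ 2 / (1 + t ^ 2) ^ 2

lemma cdLineDensity_neg (s r t : ℝ) : cdLineDensity s r (-t) = cdLineDensity (-s) r t := by
  rw [cdLineDensity, cdLineDensity, ← abs_neg]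
  ring_nf

lemma integrable_cdLineDensity (s r : ℝ) : Integrable (cdLineDensity s r) := by
  refine (integrable_inv_one_add_sq.const_mul (r ^ 2 + s ^ 2)).mono'
    (by unfold cdLineDensity; fun_prop : Measurable _).aestronglyMeasurable
    (ae_of_all _ fun t => ?_)
  have hmin : (min (1 - |r * t + s|) 0) ^ 2 ≤ (r * t + s) ^ 2 := by
    rw [← sq_abs (r * t + s)]
    rcases le_total |r * t + s| 1 with h | h
    · rw [min_eq_right (by linarith), zero_pow two_ne_zero]; positivity
    · rw [min_eq_left (by linarith)]; nlinarith
  have hcs : (r * t + s) ^ 2 ≤ (r ^ 2 + s ^ 2) * (1 + t ^ 2) := by nlinarith [sq_nonneg (s * t - r)]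
  rw [Real.norm_of_nonneg (by unfold cdLineDensity; positivity), cdLineDensity,
    div_le_iff₀ (by positivity)]
  calc (min (1 - |r * t + s|) 0) ^ 2 ≤ (r ^ 2 + s ^ 2) * (1 + t ^ 2) := hmin.trans hcs
    _ = (r ^ 2 + s ^ 2) * (1 + t ^ 2)⁻¹ * (1 + t ^ 2) ^ 2 := by field_simp

lemma setIntegral_Ioi_cdLineDensity {r : ℝ} (hr : 0 < r) (s : ℝ) :
    ∫ t in Ioi ((1 - s) / r), cdLineDensity s r t = tailIntegral (1 - s) r := by
  rw [← integral_Ioi_eq_tailIntegral hr]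
  refine setIntegral_congr_fun measurableSet_Ioi fun t ht => ?_
  have h : 1 - s < r * t := by rwa [mem_Ioi, div_lt_iff₀ hr, mul_comm] at ht
  rw [cdLineDensity, abs_of_pos (by linarith), min_eq_left (by linarith)]
  ring

lemma setIntegral_Ioc_cdLineDensity {r : ℝ} (hr : 0 < r) (s : ℝ) :
    ∫ t in Ioc (-(1 + s) / r) ((1 - s) / r), cdLineDensity s r t = 0 := by
  refine setIntegral_eq_zero_of_forall_eq_zero fun t ht => ?_
  rw [mem_Ioc, div_lt_iff₀ hr, le_div_iff₀ hr] at ht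
  rw [cdLineDensity, min_eq_right (by linarith [abs_le.2 (⟨by linarith, by linarith⟩ :
    -1 ≤ r * t + s ∧ r * t + s ≤ 1)]), zero_pow two_ne_zero, zero_div]

lemma integral_cdLineDensity {r : ℝ} (hr : 0 < r) (s : ℝ) :
    ∫ t, cdLineDensity s r t = tailIntegral (1 - s) r + tailIntegral (1 + s) r := by
  have hint := integrable_cdLineDensity s r
  have hleft : ∫ t in Iic (-(1 + s) / r), cdLineDensity s r t = tailIntegral (1 + s) r := by
    rw [neg_div, ← integral_comp_neg_Ioi]
    simp only [cdLineDensity_neg]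
    simpa using setIntegral_Ioi_cdLineDensity hr (-s)
  have hright : ∫ t in Ioi (-(1 + s) / r), cdLineDensity s r t = tailIntegral (1 - s) r := by
    rw [← Ioc_union_Ioi_eq_Ioi (div_le_div_of_nonneg_right (by linarith : -(1 + s) ≤ 1 - s) hr.le),
      setIntegral_union (Ioc_disjoint_Ioi le_rfl) measurableSet_Ioi hint.integrableOn
        hint.integrableOn, setIntegral_Ioc_cdLineDensity hr, setIntegral_Ioi_cdLineDensity hr,
      zero_add]
  rw [← intervalIntegral.integral_Iic_add_Ioi hint.integrableOn hint.integrableOn, hleft, hright,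
    add_comm]

lemma cd_eq_integral_cdLineDensity (s r : ℝ) : cd s r = 2 / π * ∫ t, cdLineDensity s r t := by
  have hhom (c x y : ℝ) : (min (|c * x| - |r * (c * y) + s * (c * x)|) 0) ^ 2 =
      c ^ 2 * (min (|x| - |r * y + s * x|) 0) ^ 2 := by
    rw [show r * (c * y) + s * (c * x) = c * (r * y + s * x) by ring, abs_mul, abs_mul, ← mul_sub]
    generalize |x| - |r * y + s * x| = a
    rw [← mul_zero |c|, ← mul_min_of_nonneg _ _ (abs_nonneg c), mul_zero, mul_pow, sq_abs]
  rw [cd, integral_stdGaussian_prod_stdGaussian_of_homogeneous (by fun_prop) hhom]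
  simp [cdLineDensity]

lemma cd_eq_tailIntegral {r : ℝ} (hr : 0 < r) (s : ℝ) :
    cd s r = 2 / π * (tailIntegral (1 - s) r + tailIntegral (1 + s) r) := by
  rw [cd_eq_integral_cdLineDensity, integral_cdLineDensity hr]

lemma hasDerivAt_tailIntegral (c : ℝ) {r : ℝ} (hr : r ≠ 0) :
    HasDerivAt (tailIntegral c) (r * (π / 2 - arctan (c / r))) r := by
  have hdiv : HasDerivAt (fun x => c / x) (-c / r ^ 2) r := by
    simpa [div_eq_mul_inv] using (hasDerivAt_inv hr).const_mul c
  have h := (((hasDerivAt_pow 2 r).add_const (c ^ 2)).div_const 2).mul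
    ((hdiv.arctan).const_sub (π / 2)) |>.sub ((hasDerivAt_id r).mul_const c |>.div_const 2)
  refine h.congr_deriv ?_
  field_simp
  ring

lemma tendsto_tailIntegral_nhdsGT_zero {c : ℝ} (hc : 0 ≤ c) :
    Tendsto (tailIntegral c) (𝓝[>] 0) (𝓝 0) := by
  have hid : Tendsto (fun r : ℝ => r) (𝓝[>] 0) (𝓝 0) := nhdsWithin_le_nhds
  unfold tailIntegral
  rcases hc.eq_or_lt with rfl | hc
  · simpa using ((hid.pow 2).div_const 2).mul_const (π / 2)
  · have harctan : Tendsto (fun r => arctan (c / r)) (𝓝[>] 0) (𝓝 (π / 2)) :=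
      (tendsto_arctan_atTop.mono_right nhdsWithin_le_nhds).comp
        (tendsto_inv_nhdsGT_zero.const_mul_atTop hc)
    simpa using (((hid.pow 2).add_const (c ^ 2)).div_const 2 |>.mul
      (harctan.const_sub (π / 2))).sub ((hid.mul_const c).div_const 2)

def arccotSum (s r : ℝ) : ℝ := (π / 2 - arctan ((1 - s) / r)) + (π / 2 - arctan ((1 + s) / r))

lemma hasDerivAt_cd (s : ℝ) {r : ℝ} (hr : 0 < r) :
    HasDerivAt (cd s) (2 / π * r * arccotSum s r) r := by
  have h := ((hasDerivAt_tailIntegral (1 - s) hr.ne').add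
    (hasDerivAt_tailIntegral (1 + s) hr.ne')).const_mul (2 / π)
  refine (h.congr_deriv (by rw [arccotSum]; ring)).congr_of_eventuallyEq ?_
  filter_upwards [lt_mem_nhds hr] with x hx
  exact cd_eq_tailIntegral hx s

lemma cd_zero {s : ℝ} (hs : s ∈ Icc (-1 : ℝ) 1) : cd s 0 = 0 := by
  have h (p : ℝ × ℝ) : min (|p.1| - |0 * p.2 + s * p.1|) 0 = 0 := by
    rw [zero_mul, zero_add, abs_mul]
    exact min_eq_right (sub_nonneg.2 (mul_le_of_le_one_left (abs_nonneg _) (abs_le.2 hs)))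
  simp only [cd, h, zero_pow two_ne_zero, integral_zero]

lemma continuousWithinAt_cd_zero {s : ℝ} (hs : s ∈ Icc (-1 : ℝ) 1) :
    ContinuousWithinAt (cd s) (Ici 0) 0 := by
  rw [← continuousWithinAt_Ioi_iff_Ici, ContinuousWithinAt, cd_zero hs]
  have h := ((tendsto_tailIntegral_nhdsGT_zero (sub_nonneg.2 hs.2)).add
    (tendsto_tailIntegral_nhdsGT_zero (neg_le_iff_add_nonneg'.1 hs.1))).const_mul (2 / π)
  rw [add_zero, mul_zero] at h
  exact h.congr' (eventually_nhdsWithin_of_forall fun r hr => (cd_eq_tailIntegral hr s).symm)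

lemma calpha_pos {α : ℝ} (hα : 2 < α) : 0 < calpha α :=
  one_div_pos.2 (tan_pos_of_pos_of_lt_pi_div_two (by positivity)
    (div_lt_div_of_pos_left pi_pos (by norm_num) hα))

lemma ralpha_sq_add_two_mul {α s : ℝ} (hs : s ∈ Icc (-1 : ℝ) 1) :
    ralpha α s ^ 2 + 2 * calpha α * ralpha α s = 1 - s ^ 2 := by
  have h : √(calpha α ^ 2 + 1 - s ^ 2) ^ 2 = calpha α ^ 2 + 1 - s ^ 2 :=
    sq_sqrt (by nlinarith [hs.1, hs.2])
  rw [ralpha]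
  linear_combination h

lemma ralpha_nonneg {α s : ℝ} (hs : s ∈ Icc (-1 : ℝ) 1) : 0 ≤ ralpha α s := by
  rw [ralpha, sub_nonneg]
  exact le_sqrt_of_sq_le (by nlinarith [hs.1, hs.2])

lemma arccotSum_strictMonoOn {s : ℝ} (hs : s ∈ Icc (-1 : ℝ) 1) :
    StrictMonoOn (arccotSum s) (Ioi 0) := by
  intro r₁ hr₁ r₂ _ hr
  have hle {c : ℝ} (hc : 0 ≤ c) : arctan (c / r₂) ≤ arctan (c / r₁) :=
    arctan_strictMono.monotone (div_le_div_of_nonneg_left hc hr₁ hr.le)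
  have hlt {c : ℝ} (hc : 0 < c) : arctan (c / r₂) < arctan (c / r₁) :=
    arctan_strictMono (div_lt_div_of_pos_left hc hr₁ hr)
  rw [arccotSum, arccotSum]
  rcases hs.2.lt_or_eq with hs₂ | rfl
  · linarith [hlt (sub_pos.2 hs₂), hle (by linarith [hs.1] : 0 ≤ 1 + s)]
  · linarith [hle (by norm_num : (0 : ℝ) ≤ 1 - 1), hlt (by norm_num : (0 : ℝ) < 1 + 1)]

lemma arccotSum_ralpha {α s : ℝ} (hα : 2 < α) (hs : s ∈ Icc (-1 : ℝ) 1)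
    (hR : 0 < ralpha α s) : arccotSum s (ralpha α s) = π / α := by
  have hquad := ralpha_sq_add_two_mul (α := α) hs
  set R := ralpha α s
  have hc := calpha_pos hα
  have h₁ : 0 < 1 - s := by nlinarith
  have h₂ : 0 < 1 + s := by nlinarith
  have hprod : R / (1 - s) * (R / (1 + s)) < 1 := by
    rw [div_mul_div_comm, div_lt_one (by positivity)]
    nlinarith
  have htan : (R / (1 - s) + R / (1 + s)) / (1 - R / (1 - s) * (R / (1 + s))) = tan (π / α) := by
    rw [← one_div_one_div (tan _), ← calpha]
    field_simp
    rw [div_eq_one_iff_eq (by nlinarith)]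
    linear_combination hquad
  rw [arccotSum, ← arctan_inv_of_pos (by positivity), ← arctan_inv_of_pos (by positivity),
    inv_div, inv_div, arctan_add hprod, htan, arctan_tan]
  · linarith [pi_pos, div_pos pi_pos (by linarith : 0 < α)]
  · exact div_lt_div_of_pos_left pi_pos (by norm_num) hα

lemma arccotSum_lt_of_lt_ralpha {α s r : ℝ} (hα : 2 < α) (hs : s ∈ Icc (-1 : ℝ) 1) (hr : 0 < r)
    (h : r < ralpha α s) : arccotSum s r < π / α :=
  arccotSum_ralpha hα hs (hr.trans h) ▸ arccotSum_strictMonoOn hs hr (hr.trans h) h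

lemma lt_arccotSum_of_ralpha_lt {α s r : ℝ} (hα : 2 < α) (hs : s ∈ Icc (-1 : ℝ) 1)
    (h : ralpha α s < r) : π / α < arccotSum s r := by
  rcases (ralpha_nonneg (α := α) hs).eq_or_lt with hR | hR
  · -- `r_α(s) = 0` forces `s = ±1`, and then one of the two terms of `arccotSum` is `π / 2`.
    have hs₁ : (1 - s) * (1 + s) = 0 := by
      have h₀ := ralpha_sq_add_two_mul (α := α) hs
      rw [← hR] at h₀
      linear_combination -h₀
    have hpos (x : ℝ) : 0 < π / 2 - arctan x := sub_pos.2 (arctan_lt_pi_div_two x)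
    have hπα : π / α < π / 2 := div_lt_div_of_pos_left pi_pos two_pos hα
    rw [arccotSum]
    rcases mul_eq_zero.1 hs₁ with h₀ | h₀
    · linarith [hpos ((1 + s) / r), show arctan ((1 - s) / r) = 0 by rw [h₀, zero_div, arctan_zero]]
    · linarith [hpos ((1 - s) / r), show arctan ((1 + s) / r) = 0 by rw [h₀, zero_div, arctan_zero]]
  · exact arccotSum_ralpha hα hs hR ▸ arccotSum_strictMonoOn hs hR (hR.trans h) h

/-- **Lemma.** For `α > 2` and `s ∈ [-1,1]`, `r ↦ r² - α c_d(s,r)` on `[0,∞)` has the unique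
global maximizer `r_α(s)`. -/
theorem stmt12 (α : ℝ) (hα : 2 < α) (s : ℝ) (hs : s ∈ Set.Icc (-1 : ℝ) 1) :
    ∀ r : ℝ, 0 ≤ r → r ≠ ralpha α s →
      r ^ 2 - α * cd s r < ralpha α s ^ 2 - α * cd s (ralpha α s) := by
  intro r hr hne
  have hα₀ : 0 < α := by linarith
  have hderiv (x : ℝ) (hx : 0 < x) : HasDerivAt (fun y => y ^ 2 - α * cd s y)
      (2 * α / π * x * (π / α - arccotSum s x)) x :=
    ((hasDerivAt_pow 2 x).sub ((hasDerivAt_cd s hx).const_mul α)).congr_deriv (by field_simp; ring)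
  refine apply_lt_of_deriv_pos_of_deriv_neg (ralpha_nonneg hs)
    ((continuous_pow 2).continuousWithinAt.sub ((continuousWithinAt_cd_zero hs).const_mul α))
    hderiv (fun x hx => ?_) (fun x hx => ?_) hr hne
  · exact mul_pos (mul_pos (by positivity) hx.1)
      (sub_pos.2 (arccotSum_lt_of_lt_ralpha hα hs hx.1 hx.2))
  · exact mul_neg_of_pos_of_neg
      (mul_pos (by positivity) ((ralpha_nonneg hs).trans_lt hx))
      (sub_neg.2 (lt_arccotSum_of_ralpha_lt hα hs hx))
end
end
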